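/- Let n ≥ 1 and let I^1, I^2, I^3 be real 4n×4n matrices, each skew-symmetric ((I^p)^T = −I^p), satisfying the quaternion algebra I^p I^q = −δ^{pq}·1 + Σ_r ε^{pqr} I^r. Then there exists an orthogonal matrix R ∈ O(4n) such that R^T I^1 R = diag(𝓘,…,𝓘), R^T I^2 R = diag(𝓙,…,𝓙) and R^T I^3 R = diag(𝓚,…,𝓚), each block-diagonal with n identical 4×4 blocks. -/

import Mathlib

open Matrix

noncomputable section

/-- The totally antisymmetric symbol `ε^{pqr}` on `{0,1,2}` with `ε^{012} = 1`. -/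
def epsLC (p q r : Fin 3) : ℝ :=
  ((((q : ℕ) : ℝ) - ((p : ℕ) : ℝ)) * (((r : ℕ) : ℝ) - ((q : ℕ) : ℝ)) *
    (((r : ℕ) : ℝ) - ((p : ℕ) : ℝ))) / 2

/-- The canonical `4×4` quaternionic structure `𝓘`. -/
def quatI : Matrix (Fin 4) (Fin 4) ℝ :=
  !![0, 0, 0, 1; 0, 0, 1, 0; 0, -1, 0, 0; -1, 0, 0, 0]

/-- The canonical `4×4` quaternionic structure `𝓙`. -/
def quatJ : Matrix (Fin 4) (Fin 4) ℝ :=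
  !![0, 0, 1, 0; 0, 0, 0, -1; -1, 0, 0, 0; 0, 1, 0, 0]

/-- The canonical `4×4` quaternionic structure `𝓚`. -/
def quatK : Matrix (Fin 4) (Fin 4) ℝ :=
  !![0, 1, 0, 0; -1, 0, 0, 0; 0, 0, 0, 1; 0, 0, -1, 0]

/-- The triple `(𝓘, 𝓙, 𝓚)`. -/
def canQ : Fin 3 → Matrix (Fin 4) (Fin 4) ℝ := ![quatI, quatJ, quatK]

/-!
The `I p` are skew, square to `-1` and anticommute, so for a unit vector `y` the four vectors
`I 0 y, -I 1 y, I 2 y, y` are orthonormal, and `I p` acts on them by the matrix `canQ p`.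
Since `(I p)ᵀ = -I p`, a vector orthogonal to one such quaternionic line has its whole
quaternionic line orthogonal to it. Picking unit vectors `y₁, …, yₙ` one at a time, each orthogonal
to the lines of the previous ones, the `4n` vectors `I 0 yⱼ, -I 1 yⱼ, I 2 yⱼ, yⱼ` form the
columns of an `R` with `Rᵀ R = 1` and `I p R = R · diag(canQ p, …, canQ p)`.
-/

section Frame

variable {m ι κ : Type*} [Fintype m]

lemma exists_dotProduct_self_eq_one_of_card_lt [Fintype κ] (g : κ → m → ℝ)
    (h : Fintype.card κ < Fintype.card m) :
    ∃ y : m → ℝ, y ⬝ᵥ y = 1 ∧ ∀ i, g i ⬝ᵥ y = 0 := by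
  obtain ⟨x, hx, hx0⟩ := (Submodule.ne_bot_iff _).mp
    (LinearMap.ker_ne_bot_of_finrank_lt (f := (Matrix.of g).mulVecLin) (by simpa using h))
  have hpos : 0 < x ⬝ᵥ x :=
    lt_of_le_of_ne (Finset.sum_nonneg fun i _ => mul_self_nonneg (x i))
      (Ne.symm (dotProduct_self_eq_zero.not.mpr hx0))
  refine ⟨(√(x ⬝ᵥ x))⁻¹ • x, ?_, fun i => ?_⟩
  · rw [smul_dotProduct, dotProduct_smul, smul_smul, smul_eq_mul, ← mul_inv,
      Real.mul_self_sqrt hpos.le, inv_mul_cancel₀ hpos.ne']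
  · have hi : g i ⬝ᵥ x = 0 := congr_fun (LinearMap.mem_ker.mp hx) i
    rw [dotProduct_smul, hi, smul_zero]

def frameMatrix (J : ι → Matrix m m ℝ) (e : κ → m → ℝ) : Matrix m (ι × κ) ℝ :=
  of fun i x => (J x.1 *ᵥ e x.2) i

lemma transpose_frameMatrix_mul_frameMatrix_apply (J : ι → Matrix m m ℝ) (e : κ → m → ℝ)
    (x y : ι × κ) :
    ((frameMatrix J e)ᵀ * frameMatrix J e) x y = (J x.1 *ᵥ e x.2) ⬝ᵥ (J y.1 *ᵥ e y.2) :=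
  rfl

lemma mul_frameMatrix [Fintype ι] [Fintype κ] [DecidableEq κ] {J : ι → Matrix m m ℝ}
    {M : Matrix m m ℝ} {A : Matrix ι ι ℝ} (hMJ : ∀ b, M * J b = ∑ c, A c b • J c) (e : κ → m → ℝ) :
    M * frameMatrix J e = frameMatrix J e * blockDiagonal fun _ : κ => A := by
  ext i ⟨b, k⟩
  have hcol : (M * frameMatrix J e) i (b, k) = ((M * J b) *ᵥ e k) i := by
    rw [← mulVec_mulVec]; rfl
  rw [hcol, hMJ]
  simp only [mul_apply, frameMatrix, of_apply, Fintype.sum_prod_type, blockDiagonal_apply,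
    sum_mulVec, smul_mulVec, Finset.sum_apply, Pi.smul_apply, smul_eq_mul]
  simp [mul_comm]

lemma mulVec_dotProduct_mulVec (A B : Matrix m m ℝ) (y z : m → ℝ) :
    (A *ᵥ y) ⬝ᵥ (B *ᵥ z) = y ⬝ᵥ ((Aᵀ * B) *ᵥ z) := by
  rw [← mulVec_mulVec, dotProduct_mulVec y, vecMul_transpose]

lemma dotProduct_mulVec_eq_zero_of_mem_span {J : ι → Matrix m m ℝ} {y z : m → ℝ}
    (h : ∀ c, y ⬝ᵥ (J c *ᵥ z) = 0) {M : Matrix m m ℝ} (hM : M ∈ Submodule.span ℝ (Set.range J)) :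
    y ⬝ᵥ (M *ᵥ z) = 0 := by
  induction hM using Submodule.span_induction with
  | mem M hM => obtain ⟨c, rfl⟩ := hM; exact h c
  | zero => simp
  | add M N _ _ hM hN => rw [add_mulVec, dotProduct_add, hM, hN, add_zero]
  | smul r M _ hM => rw [smul_mulVec, dotProduct_smul, hM, smul_zero]

lemma mulVec_dotProduct_mulVec_eq_zero {J : ι → Matrix m m ℝ}
    (hspan : ∀ a b, (J a)ᵀ * J b ∈ Submodule.span ℝ (Set.range J)) {y z : m → ℝ}
    (h : ∀ c, y ⬝ᵥ (J c *ᵥ z) = 0) (a b : ι) :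
    (J a *ᵥ y) ⬝ᵥ (J b *ᵥ z) = 0 := by
  rw [mulVec_dotProduct_mulVec]
  exact dotProduct_mulVec_eq_zero_of_mem_span h (hspan a b)

end Frame

section Clifford

variable {m ι : Type*} [Fintype m] [DecidableEq m] [DecidableEq ι] {J : ι → Matrix m m ℝ}

lemma mulVec_dotProduct_mulVec_self
    (hJ : ∀ a b, (J a)ᵀ * J b + (J b)ᵀ * J a = if a = b then 2 else 0) (y : m → ℝ) (a b : ι) :
    (J a *ᵥ y) ⬝ᵥ (J b *ᵥ y) = if a = b then y ⬝ᵥ y else 0 := by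
  have h := congrArg (fun M => y ⬝ᵥ (M *ᵥ y)) (hJ a b)
  simp only [add_mulVec, dotProduct_add, ← mulVec_dotProduct_mulVec] at h
  rw [dotProduct_comm (J b *ᵥ y)] at h
  split_ifs at h ⊢ <;>
    simp only [ofNat_mulVec, zero_mulVec, dotProduct_smul, dotProduct_zero, smul_eq_mul,
      add_self_eq_zero] at h <;>
    linarith

lemma exists_transpose_frameMatrix_mul_self_eq_one [Fintype ι] [Nonempty ι]
    (hJ : ∀ a b, (J a)ᵀ * J b + (J b)ᵀ * J a = if a = b then 2 else 0)
    (hspan : ∀ a b, (J a)ᵀ * J b ∈ Submodule.span ℝ (Set.range J)) :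
    ∀ k, Fintype.card ι * k ≤ Fintype.card m →
      ∃ e : Fin k → m → ℝ, (frameMatrix J e)ᵀ * frameMatrix J e = 1
  | 0, _ => ⟨Fin.elim0, by ext ⟨_, j⟩; exact j.elim0⟩
  | k + 1, hk => by
    obtain ⟨e, he⟩ :=
      exists_transpose_frameMatrix_mul_self_eq_one hJ hspan k (by rw [mul_add] at hk; omega)
    obtain ⟨y, hy, hperp⟩ := exists_dotProduct_self_eq_one_of_card_lt
      (fun x : ι × Fin k => J x.1 *ᵥ e x.2) (by
        rw [Fintype.card_prod, Fintype.card_fin]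
        exact lt_of_lt_of_le ((Nat.mul_lt_mul_left Fintype.card_pos).2 k.lt_add_one) hk)
    have hy' : ∀ c l, y ⬝ᵥ (J c *ᵥ e l) = 0 := fun c l => by
      rw [dotProduct_comm]; exact hperp (c, l)
    refine ⟨Fin.snoc e y, ?_⟩
    ext ⟨a, j⟩ ⟨b, l⟩
    rw [transpose_frameMatrix_mul_frameMatrix_apply, one_apply]
    induction j using Fin.lastCases with
    | last =>
      induction l using Fin.lastCases with
      | last => simp [mulVec_dotProduct_mulVec_self hJ, hy]
      | cast l =>
        simp [mulVec_dotProduct_mulVec_eq_zero hspan (hy' · l), (Fin.castSucc_lt_last l).ne']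
    | cast j =>
      induction l using Fin.lastCases with
      | last =>
        rw [dotProduct_comm]
        simp [mulVec_dotProduct_mulVec_eq_zero hspan (hy' · j), (Fin.castSucc_lt_last j).ne]
      | cast l =>
        have hjl := congr_fun (congr_fun he (a, j)) (b, l)
        rw [transpose_frameMatrix_mul_frameMatrix_apply, one_apply] at hjl
        simpa [Fin.castSucc_inj] using hjl

end Clifford

section Quaternion

variable {m : Type*} [Fintype m] [DecidableEq m] {I : Fin 3 → Matrix m m ℝ}

def IsQuaternionTriple (I : Fin 3 → Matrix m m ℝ) : Prop :=
  ∀ p q, I p * I q = -(if p = q then 1 else 0) + ∑ r, epsLC p q r • I r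

lemma IsQuaternionTriple.mul_relations (hquat : IsQuaternionTriple I) :
    I 0 * I 0 = -1 ∧ I 1 * I 1 = -1 ∧ I 2 * I 2 = -1 ∧
      I 0 * I 1 = I 2 ∧ I 1 * I 2 = I 0 ∧ I 2 * I 0 = I 1 ∧
      I 1 * I 0 = -I 2 ∧ I 2 * I 1 = -I 0 ∧ I 0 * I 2 = -I 1 := by
  unfold IsQuaternionTriple at hquat
  refine ⟨?_, ?_, ?_, ?_, ?_, ?_, ?_, ?_, ?_⟩ <;>
    norm_num [hquat, Fin.sum_univ_three, epsLC, Fin.ext_iff]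

-- The sign of `I 1` makes `I p` act on the columns `I 0 y, -I 1 y, I 2 y, y` by `canQ p`.
def quatFrameMaps (I : Fin 3 → Matrix m m ℝ) : Fin 4 → Matrix m m ℝ := ![I 0, -I 1, I 2, 1]

lemma IsQuaternionTriple.mul_quatFrameMaps (hquat : IsQuaternionTriple I) (p : Fin 3) (b : Fin 4) :
    I p * quatFrameMaps I b = ∑ c, canQ p c b • quatFrameMaps I c := by
  obtain ⟨h00, h11, h22, h01, h12, h20, h10, h21, h02⟩ := hquat.mul_relations
  fin_cases p <;> fin_cases b <;>
    simp [quatFrameMaps, canQ, quatI, quatJ, quatK, Fin.sum_univ_succ, h00, h11, h22, h01, h12,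
      h20, h10, h21, h02]

lemma transpose_quatFrameMaps_mul_add (hskew : ∀ p, (I p)ᵀ = -I p) (hquat : IsQuaternionTriple I)
    (a b : Fin 4) :
    (quatFrameMaps I a)ᵀ * quatFrameMaps I b + (quatFrameMaps I b)ᵀ * quatFrameMaps I a =
      if a = b then 2 else 0 := by
  obtain ⟨h00, h11, h22, h01, h12, h20, h10, h21, h02⟩ := hquat.mul_relations
  fin_cases a <;> fin_cases b <;>
    simp [quatFrameMaps, hskew, h00, h11, h22, h01, h12, h20, h10, h21, h02, one_add_one_eq_two]

lemma transpose_quatFrameMaps_mul_mem_span (hskew : ∀ p, (I p)ᵀ = -I p)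
    (hquat : IsQuaternionTriple I) (a b : Fin 4) :
    (quatFrameMaps I a)ᵀ * quatFrameMaps I b ∈ Submodule.span ℝ (Set.range (quatFrameMaps I)) := by
  have hmem : ∀ p, I p * quatFrameMaps I b ∈ Submodule.span ℝ (Set.range (quatFrameMaps I)) :=
    fun p => by
      rw [hquat.mul_quatFrameMaps p b]
      exact Submodule.sum_mem _ fun c _ =>
        Submodule.smul_mem _ _ (Submodule.subset_span (Set.mem_range_self c))
  fin_cases a
  · change (I 0)ᵀ * _ ∈ _
    rw [hskew, neg_mul]
    exact neg_mem (hmem 0)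
  · change (-I 1)ᵀ * _ ∈ _
    rw [transpose_neg, hskew, neg_neg]
    exact hmem 1
  · change (I 2)ᵀ * _ ∈ _
    rw [hskew, neg_mul]
    exact neg_mem (hmem 2)
  · change (1 : Matrix m m ℝ)ᵀ * _ ∈ _
    rw [transpose_one, Matrix.one_mul]
    exact Submodule.subset_span (Set.mem_range_self b)

end Quaternion

theorem stmt12_general (n : ℕ)
    (I : Fin 3 → Matrix (Fin 4 × Fin n) (Fin 4 × Fin n) ℝ)
    (hskew : ∀ p, (I p)ᵀ = -(I p))
    (hquat : ∀ p q, I p * I q =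
        -(if p = q then (1 : Matrix (Fin 4 × Fin n) (Fin 4 × Fin n) ℝ) else 0) +
          ∑ r, epsLC p q r • I r) :
    ∃ R : Matrix (Fin 4 × Fin n) (Fin 4 × Fin n) ℝ,
      Rᵀ * R = 1 ∧
      ∀ p, Rᵀ * I p * R = Matrix.blockDiagonal fun _ : Fin n => canQ p := by
  obtain ⟨e, he⟩ := exists_transpose_frameMatrix_mul_self_eq_one
    (transpose_quatFrameMaps_mul_add hskew hquat)
    (transpose_quatFrameMaps_mul_mem_span hskew hquat) n (by simp)
  refine ⟨frameMatrix (quatFrameMaps I) e, he, fun p => ?_⟩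
  rw [Matrix.mul_assoc, mul_frameMatrix (IsQuaternionTriple.mul_quatFrameMaps hquat p),
    ← Matrix.mul_assoc, he, Matrix.one_mul]

/-- Appendix B: a triple of real skew-symmetric `4n×4n` matrices
satisfying the quaternion algebra can be brought, by an orthogonal change of basis, to
the canonical block-diagonal form `diag(𝓘,…,𝓘)`, `diag(𝓙,…,𝓙)`, `diag(𝓚,…,𝓚)`. -/
theorem stmt12 (n : ℕ) (hn : 1 ≤ n)
    (I : Fin 3 → Matrix (Fin 4 × Fin n) (Fin 4 × Fin n) ℝ)
    (hskew : ∀ p, (I p)ᵀ = -(I p))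
    (hquat : ∀ p q, I p * I q =
        -(if p = q then (1 : Matrix (Fin 4 × Fin n) (Fin 4 × Fin n) ℝ) else 0) +
          ∑ r, epsLC p q r • I r) :
    ∃ R : Matrix (Fin 4 × Fin n) (Fin 4 × Fin n) ℝ,
      Rᵀ * R = 1 ∧
      ∀ p, Rᵀ * I p * R = Matrix.blockDiagonal fun _ : Fin n => canQ p :=
  stmt12_general n I hskew hquat
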